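/- arXiv:0704.2264 — 2 statements merged into one kernel-verified Lean document; each statement's English description precedes it below -/
import Mathlib

section
/- The chromatic polynomial of the complete bipartite graph K_{3,4} has a real root in the open interval (1.781, 1.782); in particular K_{3,4} is a 3-connected graph with a chromatic root in (1, 2). -/
/-!
A proper coloring of `K_{m,n}` with `k` colors is a coloring `f` of the `m`-side together with
a coloring of the `n`-side avoiding the image of `f`, so `P(k) = ∑_f (k - #(image f)) ^ n`.
For `m = 3`, grouping the `f` by `#(image f) ∈ {1, 2, 3}` gives
`P(x) = x(x-1)^4 + 3x(x-1)(x-2)^4 + x(x-1)(x-2)(x-3)^4` at every integer `x ≥ 3`, hence as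
polynomials, and this polynomial changes sign between `1.781` and `1.782`.
Deleting at most two vertices of `K_{3,4}` leaves a vertex on each side, and a complete
bipartite graph with both sides nonempty is connected.
-/

/-- The number of proper colorings of `G` with a palette of `k` colors. -/
noncomputable def numColorings {V : Type} [Fintype V] (G : SimpleGraph V) (k : ℕ) : ℕ :=
  Nat.card {f : V → Fin k // ∀ u v, G.Adj u v → f u ≠ f v}

/-- `P` is the chromatic polynomial of `G`: for every natural number `k`, evaluating `P`
at `k` gives the number of proper `k`-colorings of `G`. -/
def IsChromaticPolynomial {V : Type} [Fintype V] (G : SimpleGraph V) (P : Polynomial ℝ) : Prop :=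
  ∀ k : ℕ, P.eval (k : ℝ) = numColorings G k

open Finset Polynomial

namespace SimpleGraph

variable {α β : Type*}

lemma completeBipartiteGraph_induce_connected {s : Set (α ⊕ β)} {a : α} {b : β}
    (ha : .inl a ∈ s) (hb : .inr b ∈ s) : ((completeBipartiteGraph α β).induce s).Connected := by
  have reachable_inl (u : s) : ((completeBipartiteGraph α β).induce s).Reachable ⟨_, ha⟩ u := by
    obtain ⟨u | u, hu⟩ := u
    · exact (Adj.reachable (v := ⟨_, hb⟩) (by simp)).trans (Adj.reachable (by simp))
    · exact Adj.reachable (by simp)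
  have : Nonempty s := ⟨⟨_, ha⟩⟩
  exact ⟨fun u v => (reachable_inl u).symm.trans (reachable_inl v)⟩

lemma completeBipartiteGraph_induce_compl_connected [Fintype α] [Fintype β]
    (W : Finset (α ⊕ β)) (hα : #W < Fintype.card α) (hβ : #W < Fintype.card β) :
    ((completeBipartiteGraph α β).induce (W : Set (α ⊕ β))ᶜ).Connected := by
  obtain ⟨_, ha, haW⟩ := exists_mem_notMem_of_card_lt_card (t := univ.map .inl) (by simpa)
  obtain ⟨_, hb, hbW⟩ := exists_mem_notMem_of_card_lt_card (t := univ.map .inr) (by simpa)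
  obtain ⟨a, -, rfl⟩ := mem_map.mp ha
  obtain ⟨b, -, rfl⟩ := mem_map.mp hb
  exact completeBipartiteGraph_induce_connected haW hbW

end SimpleGraph

section ImageCard

variable {α β : Type*} [Fintype α] [DecidableEq β]

lemma card_image_univ_mem_Icc [Nonempty α] (f : α → β) :
    #(univ.image f) ∈ Icc 1 (Fintype.card α) :=
  mem_Icc.mpr ⟨card_pos.mpr (univ_nonempty.image f), card_image_le⟩

variable [DecidableEq α] [Fintype β]

lemma card_filter_card_image_eq_one [Nonempty α] :
    #{f : α → β | #(univ.image f) = 1} = Fintype.card β := by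
  have : ({f : α → β | #(univ.image f) = 1} : Finset _) =
      univ.map ⟨Function.const α, Function.const_injective⟩ := by
    ext f
    simp only [mem_filter, mem_univ, true_and, card_eq_one, mem_map, Function.Embedding.coeFn_mk]
    constructor
    · rintro ⟨b, hb⟩
      exact ⟨b, funext fun a => by simpa [hb, eq_comm] using mem_image_of_mem f (mem_univ a)⟩
    · rintro ⟨b, rfl⟩
      exact ⟨b, image_const univ_nonempty b⟩
  rw [this, card_map, card_univ]

lemma card_filter_card_image_eq_card :
    #{f : α → β | #(univ.image f) = Fintype.card α} =
      (Fintype.card β).descFactorial (Fintype.card α) := by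
  have (f : α → β) : #(univ.image f) = Fintype.card α ↔ Function.Injective f := by
    rw [← card_univ, card_image_iff, coe_univ, Set.injOn_univ]
  simp_rw [this]
  rw [← Fintype.card_subtype, Fintype.card_congr (Equiv.subtypeInjectiveEquivEmbedding α β),
    Fintype.card_embedding_eq]

end ImageCard

lemma sum_comp_card_image_fin_three (k : ℕ) (g : ℕ → ℝ) :
    ∑ f : Fin 3 → Fin k, g #(univ.image f) =
      k * g 1 + 3 * k * (k - 1) * g 2 + k * (k - 1) * (k - 2) * g 3 := by
  have hmaps : Set.MapsTo (fun f : Fin 3 → Fin k => #(univ.image f))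
      (univ : Finset (Fin 3 → Fin k)) (Icc 1 3 : Finset ℕ) := fun f _ => by
    simpa using card_image_univ_mem_Icc f
  have hIcc : Icc 1 3 = {1, 2, 3} := by decide
  have htotal := card_eq_sum_card_fiberwise hmaps
  have h1 := card_filter_card_image_eq_one (α := Fin 3) (β := Fin k)
  have h3 := card_filter_card_image_eq_card (α := Fin 3) (β := Fin k)
  rw [← sum_fiberwise_of_maps_to hmaps]
  simp only [Fintype.card_fin, card_univ, Fintype.card_pi, prod_const] at h1 h3 htotal
  rw [hIcc] at htotal ⊢
  have hdesc : (k.descFactorial 3 : ℝ) = k * (k - 1) * (k - 2) := by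
    rw [← descPochhammer_eval_eq_descFactorial]
    simp [descPochhammer_succ_eval]
  rw [sum_congr rfl fun j _ => by
    rw [sum_congr rfl fun f hf => by rw [(mem_filter.mp hf).2], sum_const, nsmul_eq_mul]]
  rw [sum_insert (by decide), sum_insert (by decide), sum_singleton] at htotal ⊢
  rw [h1, h3, hdesc]
  have h2 := congrArg (Nat.cast : ℕ → ℝ) htotal
  push_cast [h1, h3, hdesc] at h2
  linear_combination -g 2 * h2

section Colorings

variable {α β : Type} [Fintype α] [DecidableEq α] [Fintype β]

lemma numColorings_completeBipartiteGraph (k : ℕ) :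
    numColorings (completeBipartiteGraph α β) k =
      ∑ f : α → Fin k, (k - #(univ.image f)) ^ Fintype.card β := by
  classical
  have proper_iff (f : α ⊕ β → Fin k) :
      (∀ u v, (completeBipartiteGraph α β).Adj u v → f u ≠ f v) ↔
        ∀ b, f (.inr b) ∉ univ.image (f ∘ .inl) := by
    simp only [mem_image, mem_univ, true_and, not_exists, Function.comp_apply]
    constructor
    · intro h b a
      exact h _ _ (Or.inl ⟨rfl, rfl⟩)
    · rintro h (a | a) (b | b) hab
      exacts [by simp at hab, h b a, Ne.symm (h a b), by simp at hab]
  let e := (Equiv.subtypeEquiv (Equiv.sumArrowEquivProdArrow α β (Fin k)) proper_iff).trans <|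
    (Equiv.subtypeProdEquivSigmaSubtype fun f g => ∀ b, g b ∉ univ.image f).trans <|
      Equiv.sigmaCongrRight fun f => Equiv.subtypePiEquivPi (p := fun _ c => c ∉ univ.image f)
  rw [numColorings, Nat.card_eq_fintype_card, Fintype.card_congr e, Fintype.card_sigma]
  refine sum_congr rfl fun f _ => ?_
  rw [Fintype.card_pi, prod_const, card_univ, Fintype.card_subtype_compl, Fintype.card_coe, Fintype.card_fin]

end Colorings

lemma IsChromaticPolynomial.eq_of_eval_eq {V : Type} [Fintype V] {G : SimpleGraph V}
    {P Q : ℝ[X]} (hP : IsChromaticPolynomial G P) (N : ℕ)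
    (hQ : ∀ k ≥ N, Q.eval (k : ℝ) = numColorings G k) : P = Q := by
  refine eq_of_infinite_eval_eq P Q <| Set.Infinite.mono ?_
    ((Set.Ici_infinite N).image Nat.cast_injective.injOn)
  rintro _ ⟨k, hk, rfl⟩
  exact (hP k).trans (hQ k hk).symm

lemma numColorings_completeBipartiteGraph_fin_three_fin_four {k : ℕ} (hk : 3 ≤ k) :
    (numColorings (completeBipartiteGraph (Fin 3) (Fin 4)) k : ℝ) =
      k * (k - 1) ^ 4 + 3 * k * (k - 1) * (k - 2) ^ 4 + k * (k - 1) * (k - 2) * (k - 3) ^ 4 := by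
  rw [numColorings_completeBipartiteGraph, Nat.cast_sum]
  simp only [Nat.cast_pow, Fintype.card_fin]
  rw [sum_comp_card_image_fin_three k fun j => ((k - j : ℕ) : ℝ) ^ 4]
  push_cast [show 1 ≤ k by omega, show 2 ≤ k by omega, hk]
  ring

lemma IsChromaticPolynomial.eval_completeBipartiteGraph_fin_three_fin_four {P : ℝ[X]}
    (hP : IsChromaticPolynomial (completeBipartiteGraph (Fin 3) (Fin 4)) P) (x : ℝ) :
    P.eval x = x * (x - 1) ^ 4 + 3 * x * (x - 1) * (x - 2) ^ 4 +
      x * (x - 1) * (x - 2) * (x - 3) ^ 4 := by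
  obtain rfl := hP.eq_of_eval_eq
    (Q := X * (X - 1) ^ 4 + 3 * X * (X - 1) * (X - 2) ^ 4 + X * (X - 1) * (X - 2) * (X - 3) ^ 4)
    3 fun k hk => by simp [numColorings_completeBipartiteGraph_fin_three_fin_four hk]
  simp

/-- The chromatic polynomial of the complete bipartite graph `K_{3,4}` has a real root in
the open interval `(1.781, 1.782)`; in particular `K_{3,4}` is a 3-connected graph with a
chromatic root in `(1, 2)`. -/
theorem completeBipartite_three_four_chromatic_root (P : Polynomial ℝ)
    (hP : IsChromaticPolynomial (completeBipartiteGraph (Fin 3) (Fin 4)) P) :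
    (∃ x : ℝ, 1.781 < x ∧ x < 1.782 ∧ P.eval x = 0) ∧
    (3 < Fintype.card (Fin 3 ⊕ Fin 4) ∧
      ∀ W : Finset (Fin 3 ⊕ Fin 4), W.card ≤ 2 →
        ((completeBipartiteGraph (Fin 3) (Fin 4)).induce
          ((W : Set (Fin 3 ⊕ Fin 4))ᶜ)).Connected) ∧
    (∃ x : ℝ, 1 < x ∧ x < 2 ∧ P.eval x = 0) := by
  have hsign : P.eval 1.781 < 0 ∧ 0 < P.eval 1.782 := by
    simp only [hP.eval_completeBipartiteGraph_fin_three_fin_four]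
    norm_num
  obtain ⟨x, ⟨hx₁, hx₂⟩, hx⟩ :=
    intermediate_value_Ioo (by norm_num) P.continuous.continuousOn hsign
  refine ⟨⟨x, hx₁, hx₂, hx⟩, ⟨by simp, fun W hW => ?_⟩, ⟨x, by linarith, by linarith, hx⟩⟩
  exact SimpleGraph.completeBipartiteGraph_induce_compl_connected W
    (by rw [Fintype.card_fin]; omega) (by rw [Fintype.card_fin]; omega)
end

section
/- Let G be a finite simple graph with n vertices admitting a hamiltonian path v_1, v_2, …, v_n such that for every i > 2 the vertex v_i has at least one neighbour in {v_1, v_2, …, v_{i-2}} (so v_i has at least two neighbours among v_1, …, v_{i-1}, including v_{i-1}). Then the chromatic polynomial of G has no real root in the open interval (1, 2). -/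
/-!
Induct on the number of vertices and, for a fixed number of vertices, on the graph itself.
Let `u` be the last vertex of the path, `p` its predecessor and `b` a back neighbour of `u`.
If `u` has a third neighbour `c`, deletion–contraction gives `P(G) = P(G - uc) - P(G / uc)`,
where `G - uc` keeps the path with its back neighbours and `G / uc` contains `G - u`.
Otherwise `u` has degree two and `P(G) = (x - 2) P(G - u) + P((G - u) / pb)`, the last term
being absent when `p ~ b`. Either way the sign `(-1)ⁿ P(G, x) > 0` on `(1, 2)` is inherited
from the smaller graphs, starting from `P(K₂) = x (x - 1)`.
-/

section ChromaticPolynomial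

open Polynomial

variable {V W : Type} [Fintype V] [Fintype W]

theorem numColorings_congr {G : SimpleGraph V} {H : SimpleGraph W} (e : G ≃g H) (k : ℕ) :
    numColorings G k = numColorings H k :=
  Nat.card_congr <| (e.toEquiv.arrowCongr (Equiv.refl _)).subtypeEquiv fun f =>
    ⟨fun h u v huv => h _ _ (e.symm.map_adj_iff.2 huv),
      fun h u v huv => by
        convert h (e u) (e v) (e.map_adj_iff.2 huv) using 2 <;>
          exact congrArg f (e.toEquiv.symm_apply_apply _).symm⟩

theorem numColorings_bot (k : ℕ) :
    numColorings (⊥ : SimpleGraph V) k = k ^ Fintype.card V := by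
  classical
  rw [numColorings, Nat.card_congr (Equiv.subtypeUnivEquiv fun f u v h => h.elim),
    Nat.card_eq_fintype_card, Fintype.card_fun, Fintype.card_fin]

theorem numColorings_top (k : ℕ) :
    numColorings (⊤ : SimpleGraph V) k = k.descFactorial (Fintype.card V) := by
  classical
  have hinj (f : V → Fin k) :
      (∀ u v, (⊤ : SimpleGraph V).Adj u v → f u ≠ f v) ↔ f.Injective :=
    ⟨fun h u v huv => by_contra fun hne => h u v hne huv, fun h u v huv => h.ne huv⟩
  rw [numColorings, Nat.card_congr ((Equiv.subtypeEquivRight hinj).trans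
    (Equiv.subtypeInjectiveEquivEmbedding V (Fin k))), Nat.card_eq_fintype_card,
    Fintype.card_embedding_eq, Fintype.card_fin]

theorem IsChromaticPolynomial.unique {G : SimpleGraph V} {P Q : ℝ[X]}
    (hP : IsChromaticPolynomial G P) (hQ : IsChromaticPolynomial G Q) : P = Q :=
  eq_of_infinite_eval_eq P Q <| (Set.infinite_range_of_injective Nat.cast_injective).mono <| by
    rintro _ ⟨k, rfl⟩
    simp [hP k, hQ k]

theorem isChromaticPolynomial_congr {G : SimpleGraph V} {H : SimpleGraph W} (e : G ≃g H)
    {P : ℝ[X]} : IsChromaticPolynomial G P ↔ IsChromaticPolynomial H P := by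
  simp only [IsChromaticPolynomial, numColorings_congr e]

theorem isChromaticPolynomial_bot :
    IsChromaticPolynomial (⊥ : SimpleGraph V) (X ^ Fintype.card V) := fun k => by
  simp [numColorings_bot]

theorem isChromaticPolynomial_top :
    IsChromaticPolynomial (⊤ : SimpleGraph V) (descPochhammer ℝ (Fintype.card V)) := fun k => by
  rw [numColorings_top, descPochhammer_eval_eq_descFactorial]

end ChromaticPolynomial

open Finset in
theorem Fin.cast_card_filter_ne_and_ne {k : ℕ} (x y : Fin k) :
    (#{c : Fin k | x ≠ c ∧ y ≠ c} : ℝ) = k - 2 + if x = y then 1 else 0 := by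
  have hpair : ({c : Fin k | x ≠ c ∧ y ≠ c} : Finset (Fin k)) = univ \ {x, y} := by
    ext c
    simp [eq_comm]
  rw [hpair, card_univ_sdiff, Fintype.card_fin,
    Nat.cast_sub (by simpa using card_le_univ {x, y})]
  split_ifs with h
  · simp [h]
    ring
  · rw [card_pair h]
    push_cast
    ring

namespace SimpleGraph

open Finset Polynomial

theorem deleteEdges_singleton_lt {V : Type} {G : SimpleGraph V} {u v : V} (h : G.Adj u v) :
    G.deleteEdges {s(u, v)} < G :=
  (deleteEdges_le _).lt_of_ne fun he => by
    rw [← he, deleteEdges_adj] at h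
    exact h.2 rfl

section Colorings

variable {V : Type} [Fintype V]

open scoped Classical in
noncomputable def properColorings (G : SimpleGraph V) (k : ℕ) : Finset (V → Fin k) :=
  {f | ∀ u v, G.Adj u v → f u ≠ f v}

theorem mem_properColorings {G : SimpleGraph V} {k : ℕ} {f : V → Fin k} :
    f ∈ G.properColorings k ↔ ∀ u v, G.Adj u v → f u ≠ f v := by
  simp [properColorings]

theorem numColorings_eq_card_properColorings (G : SimpleGraph V) (k : ℕ) :
    numColorings G k = #(G.properColorings k) := by
  classical
  rw [numColorings, Nat.card_eq_fintype_card, Fintype.card_subtype]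
  congr 1

theorem numColorings_deleteEdges {G : SimpleGraph V} {u v : V} (h : G.Adj u v) (k : ℕ) :
    numColorings (G.deleteEdges {s(u, v)}) k =
      numColorings G k + #{f ∈ (G.deleteEdges {s(u, v)}).properColorings k | f u = f v} := by
  have hne : {f ∈ (G.deleteEdges {s(u, v)}).properColorings k | f u ≠ f v} =
      G.properColorings k := by
    ext f
    simp only [mem_filter, mem_properColorings, deleteEdges_adj, Set.mem_singleton_iff]
    constructor
    · rintro ⟨hf, huv⟩ x y hxy
      by_cases he : s(x, y) = s(u, v)
      · rcases Sym2.eq_iff.1 he with ⟨rfl, rfl⟩ | ⟨rfl, rfl⟩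
        exacts [huv, huv.symm]
      · exact hf x y ⟨hxy, he⟩
    · exact fun hf => ⟨fun x y hxy => hf x y hxy.1, hf u v h⟩
  rw [numColorings_eq_card_properColorings, numColorings_eq_card_properColorings, ← hne,
    add_comm, card_filter_add_card_filter_not]

end Colorings

section LastVertex

variable {m k : ℕ}

theorem mem_properColorings_iff_init {G : SimpleGraph (Fin (m + 1))}
    {f : Fin (m + 1) → Fin k} :
    f ∈ G.properColorings k ↔ Fin.init f ∈ (G.comap Fin.castSucc).properColorings k ∧
      ∀ w : Fin m, G.Adj (Fin.last m) w.castSucc → f w.castSucc ≠ f (Fin.last m) := by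
  simp only [mem_properColorings, Fin.forall_fin_succ', Fin.init, comap_adj, G.irrefl,
    false_imp_iff, and_true]
  constructor
  · rintro ⟨h, -⟩
    exact ⟨fun u v huv => (h u).1 v huv, fun w hw => (h w).2 hw.symm⟩
  · rintro ⟨h, hc⟩
    exact ⟨fun u => ⟨h u, fun hu => hc u hu.symm⟩, fun w hw => (hc w hw).symm⟩

open scoped Classical in
theorem card_properColorings_eq_sum (G : SimpleGraph (Fin (m + 1))) :
    #(G.properColorings k) = ∑ g ∈ (G.comap Fin.castSucc).properColorings k,
      #{c : Fin k | ∀ w, G.Adj (Fin.last m) w.castSucc → g w ≠ c} := by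
  rw [card_eq_sum_card_fiberwise fun f hf => (mem_properColorings_iff_init.1 hf).1]
  refine sum_congr rfl fun g hg => card_nbij' (· (Fin.last m))
    (fun c => (Fin.snoc g c : Fin (m + 1) → Fin k)) ?_ ?_ ?_ ?_
  · intro f hf
    rw [mem_coe, mem_filter, mem_properColorings_iff_init] at hf
    obtain ⟨⟨-, hf⟩, rfl⟩ := hf
    exact mem_filter.2 ⟨mem_univ _, hf⟩
  · intro c hc
    simp_all [mem_properColorings_iff_init]
  · intro f hf
    rw [mem_coe, mem_filter] at hf
    exact hf.2 ▸ Fin.snoc_init_self f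
  · intro c _
    simp

theorem numColorings_of_neighbors_eq_pair {G : SimpleGraph (Fin (m + 1))} {a b : Fin m}
    (hnbr : ∀ w, G.Adj (Fin.last m) w.castSucc ↔ w = a ∨ w = b) (k : ℕ) :
    (numColorings G k : ℝ) = (k - 2) * numColorings (G.comap Fin.castSucc) k +
      #{g ∈ (G.comap Fin.castSucc).properColorings k | g a = g b} := by
  classical
  have hfibre (g : Fin m → Fin k) :
      #{c : Fin k | ∀ w, G.Adj (Fin.last m) w.castSucc → g w ≠ c} =
        #{c | g a ≠ c ∧ g b ≠ c} := by
    congr 1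
    ext c
    simp [hnbr, or_imp, forall_and]
  rw [numColorings_eq_card_properColorings, card_properColorings_eq_sum,
    numColorings_eq_card_properColorings, Nat.cast_sum]
  simp only [hfibre, Fin.cast_card_filter_ne_and_ne, sum_add_distrib, sum_const, nsmul_eq_mul,
    sum_boole, mul_comm]

/-- `G / {last, t}`: the last vertex is merged into `t`. -/
def contractLast (G : SimpleGraph (Fin (m + 1))) (t : Fin m) : SimpleGraph (Fin m) :=
  fromRel fun i j => G.Adj i.castSucc j.castSucc ∨ G.Adj i.castSucc (Fin.last m) ∧ j = t

theorem comap_castSucc_le_contractLast (G : SimpleGraph (Fin (m + 1))) (t : Fin m) :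
    G.comap Fin.castSucc ≤ G.contractLast t := fun _ _ h =>
  (fromRel_adj _ _ _).2 ⟨(G.comap _).ne_of_adj h, .inl (.inl h)⟩

theorem mem_properColorings_contractLast {G : SimpleGraph (Fin (m + 1))} {t : Fin m}
    (hnt : ¬G.Adj (Fin.last m) t.castSucc) {g : Fin m → Fin k} :
    g ∈ (G.contractLast t).properColorings k ↔
      g ∈ (G.comap Fin.castSucc).properColorings k ∧
        ∀ w, G.Adj (Fin.last m) w.castSucc → g w ≠ g t := by
  simp only [mem_properColorings, contractLast, fromRel_adj, comap_adj]
  constructor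
  · intro h
    refine ⟨fun u v huv => h u v ⟨(G.comap _).ne_of_adj huv, .inl (.inl huv)⟩,
      fun w hw => ?_⟩
    have hwt : w ≠ t := by rintro rfl; exact hnt hw
    exact h w t ⟨hwt, .inl (.inr ⟨hw.symm, rfl⟩)⟩
  · rintro ⟨h, ht⟩ u v ⟨-, (huv | ⟨hu, rfl⟩) | (hvu | ⟨hv, rfl⟩)⟩
    · exact h u v huv
    · exact ht u hu.symm
    · exact (h v u hvu).symm
    · exact (ht v hv.symm).symm

theorem card_filter_eq_numColorings_contractLast {G : SimpleGraph (Fin (m + 1))} {t : Fin m}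
    (hnt : ¬G.Adj (Fin.last m) t.castSucc) (k : ℕ) :
    #{f ∈ G.properColorings k | f (Fin.last m) = f t.castSucc} =
      numColorings (G.contractLast t) k := by
  rw [numColorings_eq_card_properColorings]
  refine card_nbij' Fin.init (fun g => (Fin.snoc g (g t) : Fin (m + 1) → Fin k)) ?_ ?_ ?_ ?_
  · intro f hf
    rw [mem_coe, mem_filter, mem_properColorings_iff_init] at hf
    rw [mem_coe, mem_properColorings_contractLast hnt]
    exact ⟨hf.1.1, fun w hw => show f w.castSucc ≠ f t.castSucc from hf.2 ▸ hf.1.2 w hw⟩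
  · intro g hg
    rw [mem_coe, mem_properColorings_contractLast hnt] at hg
    simpa [mem_properColorings_iff_init, hg.1] using hg.2
  · intro f hf
    rw [mem_coe, mem_filter] at hf
    exact (congrArg _ hf.2.symm).trans (Fin.snoc_init_self f)
  · intro g _
    simp

theorem contractLast_deleteEdges (G : SimpleGraph (Fin (m + 1))) (t : Fin m) :
    (G.deleteEdges {s(Fin.last m, t.castSucc)}).contractLast t = G.contractLast t := by
  ext i j
  simp only [contractLast, fromRel_adj, deleteEdges_adj, Set.mem_singleton_iff, Sym2.eq_iff,
    Fin.castSucc_ne_last, Fin.castSucc_inj]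
  grind

theorem numColorings_deleteEdges_last {G : SimpleGraph (Fin (m + 1))} {t : Fin m}
    (h : G.Adj (Fin.last m) t.castSucc) (k : ℕ) :
    numColorings (G.deleteEdges {s(Fin.last m, t.castSucc)}) k =
      numColorings G k + numColorings (G.contractLast t) k := by
  rw [numColorings_deleteEdges h, card_filter_eq_numColorings_contractLast (by simp),
    contractLast_deleteEdges]

end LastVertex

section BackNeighbourPath

variable {n : ℕ}

def HasBackNeighbourPath (G : SimpleGraph (Fin n)) : Prop :=
  (∀ (i : ℕ) (h : i + 1 < n), G.Adj ⟨i, Nat.lt_of_succ_lt h⟩ ⟨i + 1, h⟩) ∧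
    ∀ (i : ℕ) (h : i < n), 2 ≤ i → ∃ j : Fin n, (j : ℕ) + 2 ≤ i ∧ G.Adj j ⟨i, h⟩

namespace HasBackNeighbourPath

theorem mono {G G' : SimpleGraph (Fin n)} (hG : G.HasBackNeighbourPath) (hle : G ≤ G') :
    G'.HasBackNeighbourPath :=
  ⟨fun i h => hle (hG.1 i h), fun i h hi => (hG.2 i h hi).imp fun _ hj => ⟨hj.1, hle hj.2⟩⟩

theorem comap_castSucc {G : SimpleGraph (Fin (n + 1))} (hG : G.HasBackNeighbourPath) :
    (G.comap Fin.castSucc).HasBackNeighbourPath :=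
  ⟨fun i h => hG.1 i (by omega), fun i h hi =>
    let ⟨j, hj, hadj⟩ := hG.2 i (by omega) hi
    ⟨⟨j, by omega⟩, hj, hadj⟩⟩

theorem adj_last {G : SimpleGraph (Fin (n + 2))} (hG : G.HasBackNeighbourPath) :
    G.Adj (Fin.last n).castSucc (Fin.last (n + 1)) :=
  hG.1 n (by omega)

theorem exists_adj_last {G : SimpleGraph (Fin (n + 3))} (hG : G.HasBackNeighbourPath) :
    ∃ j : Fin (n + 1), G.Adj j.castSucc.castSucc (Fin.last (n + 2)) :=
  let ⟨j, hj, hadj⟩ := hG.2 (n + 2) (by omega) (by omega)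
  ⟨⟨j, by omega⟩, hadj⟩

theorem of_comap_castSucc {G : SimpleGraph (Fin (n + 3))}
    (hG : (G.comap Fin.castSucc).HasBackNeighbourPath)
    (hpath : G.Adj (Fin.last (n + 1)).castSucc (Fin.last (n + 2)))
    (hback : ∃ j : Fin (n + 1), G.Adj j.castSucc.castSucc (Fin.last (n + 2))) :
    G.HasBackNeighbourPath := by
  refine ⟨fun i h => ?_, fun i h hi => ?_⟩
  · by_cases hi : i + 1 < n + 2
    · exact hG.1 i hi
    · obtain rfl : i = n + 1 := by omega
      exact hpath
  · by_cases hi' : i < n + 2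
    · obtain ⟨j, hj, hadj⟩ := hG.2 i hi' hi
      exact ⟨j.castSucc, hj, hadj⟩
    · obtain rfl : i = n + 2 := by omega
      obtain ⟨j, hj⟩ := hback
      exact ⟨_, by simp; omega, hj⟩

theorem deleteEdges_last {G : SimpleGraph (Fin (n + 3))} (hG : G.HasBackNeighbourPath)
    {b : Fin (n + 1)} (hb : G.Adj b.castSucc.castSucc (Fin.last (n + 2))) {c : Fin (n + 2)}
    (hcp : c ≠ Fin.last (n + 1)) (hcb : c ≠ b.castSucc) :
    (G.deleteEdges {s(Fin.last (n + 2), c.castSucc)}).HasBackNeighbourPath := by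
  have hcomap : (G.deleteEdges {s(Fin.last (n + 2), c.castSucc)}).comap Fin.castSucc =
      G.comap Fin.castSucc := by
    ext i j
    simp [Fin.castSucc_ne_last]
  refine of_comap_castSucc (hcomap ▸ hG.comap_castSucc) ?_ ⟨b, ?_⟩
  · simpa [Sym2.eq_iff, Fin.castSucc_ne_last, Ne.symm hcp] using hG.adj_last
  · simpa [Sym2.eq_iff, Fin.castSucc_ne_last, Ne.symm hcb] using hb

end HasBackNeighbourPath

end BackNeighbourPath

section Sign

variable {n : ℕ}

def HasSignedChromaticPolynomial (G : SimpleGraph (Fin n)) : Prop :=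
  ∃ P : ℝ[X], IsChromaticPolynomial G P ∧
    ∀ x ∈ Set.Ioo (1 : ℝ) 2, 0 < (-1) ^ n * P.eval x

theorem hasSignedChromaticPolynomial_top_fin_two :
    (⊤ : SimpleGraph (Fin 2)).HasSignedChromaticPolynomial :=
  ⟨_, isChromaticPolynomial_top, fun x hx => by
    simp [descPochhammer_succ_right]
    nlinarith [hx.1, hx.2]⟩

namespace HasSignedChromaticPolynomial

theorem of_deleteEdges_last {G : SimpleGraph (Fin (n + 2))} {t : Fin (n + 1)}
    (h : G.Adj (Fin.last (n + 1)) t.castSucc)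
    (hD : (G.deleteEdges {s(Fin.last (n + 1), t.castSucc)}).HasSignedChromaticPolynomial)
    (hM : (G.contractLast t).HasSignedChromaticPolynomial) :
    G.HasSignedChromaticPolynomial := by
  obtain ⟨PD, hPD, sD⟩ := hD
  obtain ⟨PM, hPM, sM⟩ := hM
  refine ⟨PD - PM, fun k => ?_, fun x hx => ?_⟩
  · rw [eval_sub, hPD k, hPM k, numColorings_deleteEdges_last h k]
    push_cast
    ring
  · calc 0 < (-1) ^ (n + 2) * PD.eval x + (-1) ^ (n + 1) * PM.eval x :=
          add_pos (sD x hx) (sM x hx)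
      _ = (-1) ^ (n + 2) * (PD - PM).eval x := by
        rw [eval_sub, pow_succ]
        ring

theorem of_neighbors_eq_pair {G : SimpleGraph (Fin (n + 3))} {b : Fin (n + 1)}
    (hnbr : ∀ w, G.Adj (Fin.last (n + 2)) w.castSucc ↔ w = Fin.last (n + 1) ∨ w = b.castSucc)
    (hH : (G.comap Fin.castSucc).HasSignedChromaticPolynomial)
    (hM : ¬(G.comap Fin.castSucc).Adj (Fin.last (n + 1)) b.castSucc →
      ((G.comap Fin.castSucc).contractLast b).HasSignedChromaticPolynomial) :
    G.HasSignedChromaticPolynomial := by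
  set H := G.comap Fin.castSucc
  obtain ⟨Q, hQ, sQ⟩ : ∃ Q : ℝ[X],
      (∀ k : ℕ, Q.eval (k : ℝ) =
        #{g ∈ H.properColorings k | g (Fin.last (n + 1)) = g b.castSucc}) ∧
        ∀ x ∈ Set.Ioo (1 : ℝ) 2, 0 ≤ (-1) ^ (n + 1) * Q.eval x := by
    by_cases hab : H.Adj (Fin.last (n + 1)) b.castSucc
    · refine ⟨0, fun k => ?_, fun x _ => by simp⟩
      have hempty : {g ∈ H.properColorings k | g (Fin.last (n + 1)) = g b.castSucc} = ∅ :=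
        filter_eq_empty_iff.2 fun g hg => mem_properColorings.1 hg _ _ hab
      simp [hempty]
    · obtain ⟨PM, hPM, sM⟩ := hM hab
      exact ⟨PM, fun k => by rw [hPM k, card_filter_eq_numColorings_contractLast hab],
        fun x hx => (sM x hx).le⟩
  obtain ⟨PH, hPH, sH⟩ := hH
  refine ⟨(X - 2) * PH + Q, fun k => ?_, fun x hx => ?_⟩
  · simp [H, hPH k, hQ k, numColorings_of_neighbors_eq_pair hnbr k]
  · calc 0 < (2 - x) * ((-1) ^ (n + 2) * PH.eval x) + (-1) ^ (n + 1) * Q.eval x :=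
          add_pos_of_pos_of_nonneg (mul_pos (sub_pos.2 hx.2) (sH x hx)) (sQ x hx)
      _ = _ := by
        simp only [eval_add, eval_mul, eval_sub, eval_X, eval_ofNat, pow_succ]
        ring

end HasSignedChromaticPolynomial

end Sign

theorem HasBackNeighbourPath.hasSignedChromaticPolynomial {n : ℕ} {G : SimpleGraph (Fin (n + 2))}
    (hG : G.HasBackNeighbourPath) : G.HasSignedChromaticPolynomial := by
  induction n using Nat.strong_induction_on with | _ n ihn =>
  induction G using WellFoundedLT.induction with | _ G ihG =>
  cases n with
  | zero =>
    obtain rfl : G = ⊤ := by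
      ext i j
      have h01 : G.Adj 0 1 := hG.1 0 (by omega)
      fin_cases i <;> fin_cases j <;> simp [h01, h01.symm]
    exact hasSignedChromaticPolynomial_top_fin_two
  | succ n =>
    obtain ⟨b, hb⟩ := hG.exists_adj_last
    by_cases hdeg : ∃ c : Fin (n + 2), G.Adj (Fin.last (n + 2)) c.castSucc ∧
        c ≠ Fin.last (n + 1) ∧ c ≠ b.castSucc
    · obtain ⟨c, hc, hcp, hcb⟩ := hdeg
      exact .of_deleteEdges_last hc
        (ihG _ (deleteEdges_singleton_lt hc) (hG.deleteEdges_last hb hcp hcb))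
        (ihn n (by omega) (hG.comap_castSucc.mono (comap_castSucc_le_contractLast G c)))
    push Not at hdeg
    refine .of_neighbors_eq_pair (b := b) (fun w => ⟨fun hw => ?_, ?_⟩)
      (ihn n (by omega) hG.comap_castSucc) fun hab => ?_
    · by_contra! h
      exact h.2 (hdeg w hw h.1)
    · rintro (rfl | rfl)
      exacts [hG.adj_last.symm, hb.symm]
    · cases n with
      | zero =>
        rw [Fin.fin_one_eq_zero b] at hab
        exact (hab hG.comap_castSucc.adj_last.symm).elim
      | succ n =>
        exact ihn n (by omega)
          (hG.comap_castSucc.comap_castSucc.mono (comap_castSucc_le_contractLast _ b))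

end SimpleGraph

/-- (Dong & Koh) Let `G` be a finite simple graph with `n` vertices admitting a hamiltonian
path `v 0, v 1, …, v (n-1)` such that every vertex `v i` with `i ≥ 2` has at least one
neighbour among `v 0, …, v (i-2)` (hence at least two neighbours among its predecessors,
including `v (i-1)`).  Then the chromatic polynomial of `G` has no real root in the open
interval `(1, 2)`. -/
theorem no_chromatic_root_of_hamiltonian_path_with_back_neighbours {V : Type} [Fintype V]
    (G : SimpleGraph V) (n : ℕ)
    (v : Fin n → V) (hbij : Function.Bijective v)
    (hpath : ∀ (i : ℕ) (h : i + 1 < n), G.Adj (v ⟨i, by omega⟩) (v ⟨i + 1, h⟩))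
    (hback : ∀ (i : ℕ) (h : i < n), 2 ≤ i →
      ∃ j : Fin n, (j : ℕ) + 2 ≤ i ∧ G.Adj (v j) (v ⟨i, h⟩))
    (P : Polynomial ℝ) (hP : IsChromaticPolynomial G P) :
    ∀ x : ℝ, 1 < x → x < 2 → P.eval x ≠ 0 := by
  intro x hx1 hx2
  let e : Fin n ≃ V := Equiv.ofBijective v hbij
  rcases lt_or_ge n 2 with hn | hn
  · have : Subsingleton V := e.subsingleton_congr.1 (Fin.subsingleton_iff_le_one.2 (by omega))
    obtain rfl : G = ⊥ := by
      ext u w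
      simp [Subsingleton.elim u w]
    rw [hP.unique isChromaticPolynomial_bot, Polynomial.eval_pow, Polynomial.eval_X]
    exact pow_ne_zero _ (by linarith)
  · obtain ⟨n, rfl⟩ := Nat.exists_eq_add_of_le' hn
    have hG : (G.comap v).HasBackNeighbourPath := ⟨hpath, hback⟩
    obtain ⟨Q, hQ, hsign⟩ := hG.hasSignedChromaticPolynomial
    rw [((isChromaticPolynomial_congr (SimpleGraph.Iso.comap e G)).1 hQ).unique hP] at hsign
    exact fun h => by simpa [h] using hsign x ⟨hx1, hx2⟩
end
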